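/- Let ν be a bounded weight with inf ν > 0. The space WPAA(ℝ,ν) = { g + φ : g almost automorphic, φ ∈ WPAA₀(ℝ,ν) }, equipped with the supremum norm, is a Banach space (i.e., it is closed in the space of bounded continuous functions). -/

import Mathlib

open Filter MeasureTheory BoundedContinuousFunction

def AlmostAutomorphic {n : ℕ} (f : ℝ → (Fin n → ℝ)) : Prop :=
  ∀ s : ℕ → ℝ, ∃ φ : ℕ → ℕ, StrictMono φ ∧ ∃ g : ℝ → (Fin n → ℝ),
    (∀ t : ℝ, Tendsto (fun k => f (t + s (φ k))) atTop (nhds (g t))) ∧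
    (∀ t : ℝ, Tendsto (fun k => g (t - s (φ k))) atTop (nhds (f t)))

def WPAA0 {n : ℕ} (ν : ℝ → ℝ) (φ : ℝ → (Fin n → ℝ)) : Prop :=
  Continuous φ ∧ (∃ C : ℝ, ∀ t, ‖φ t‖ ≤ C) ∧
  Tendsto (fun r : ℝ =>
      (∫ s in (-r)..r, ‖φ s‖ * ν s) / (∫ s in (-r)..r, ν s)) atTop (nhds 0)

def WeightUB (ν : ℝ → ℝ) : Prop :=
  (∀ s, 0 < ν s) ∧ LocallyIntegrable ν volume ∧
  (∃ b : ℝ, ∀ s, ν s ≤ b) ∧ (∃ a : ℝ, 0 < a ∧ ∀ s, a ≤ ν s) ∧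
  Tendsto (fun r : ℝ => ∫ s in (-r)..r, ν s) atTop atTop

/-
An ergodic `φ` cannot be `≥ δ` at one of finitely many fixed translates of every point: the
translates would cover a fixed proportion of every long interval, and the weighted mean of `‖φ‖`
would stay bounded below. Hence, for `ε > 0`, one can pick translates `s k` with
`‖φ (t₀ - s k + s j)‖ < ε` whenever `k < j`. If `g` is almost automorphic and `‖g + φ‖ ≤ C`,
the Bochner limits of `g` along a subsequence of `s` carry the bound `C + ε` from the values
`g (t₀ - s k + s j)` back to `g t₀`, so `‖g‖ ≤ ‖g + φ‖`. Applied to differences, this makes the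
almost automorphic parts of a convergent sequence `g k + φ k` uniformly Cauchy; their uniform
limit is almost automorphic by a diagonal argument, and the ergodic parts converge uniformly to
an ergodic function.
-/

open Topology intervalIntegral Finset

noncomputable def weightedMean (ν f : ℝ → ℝ) (r : ℝ) : ℝ :=
  (∫ s in (-r)..r, f s * ν s) / ∫ s in (-r)..r, ν s

theorem MeasureTheory.LocallyIntegrable.intervalIntegrable {f : ℝ → ℝ}
    (hf : LocallyIntegrable f volume) (a b : ℝ) : IntervalIntegrable f volume a b :=
  (hf.integrableOn_isCompact isCompact_uIcc).intervalIntegrable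

theorem UniformCauchySeqOn.exists_tendstoUniformly {α β : Type*} [UniformSpace β]
    [CompleteSpace β] {F : ℕ → α → β} (hF : UniformCauchySeqOn F atTop Set.univ) :
    ∃ f, TendstoUniformly F f atTop := by
  choose f hf using fun x => cauchySeq_tendsto_of_complete (hF.cauchySeq (Set.mem_univ x))
  exact ⟨f, tendstoUniformlyOn_univ.1 (hF.tendstoUniformlyOn_of_tendsto fun x _ => hf x)⟩

theorem exists_strictMono_forall_of_antitone {Q : ℕ → Filter ℕ → Prop}
    (hQ : ∀ m σ, ∃ τ : ℕ → ℕ, StrictMono τ ∧ Q m (map (σ ∘ τ) atTop))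
    (hQ_anti : ∀ m, Antitone (Q m)) : ∃ d : ℕ → ℕ, StrictMono d ∧ ∀ m, Q m (map d atTop) := by
  choose τ hτ hQτ using hQ
  -- `F (m + 1)` is a subsequence of `F m` along which `Q m` holds; `d` is their diagonal
  let F : ℕ → ℕ → ℕ := fun m => Nat.rec id (fun m σ => σ ∘ τ m σ) m
  have hF_succ : ∀ m, F (m + 1) = F m ∘ τ m (F m) := fun m => rfl
  have hF_mono : ∀ m, StrictMono (F m) := by
    intro m
    induction m with
    | zero => exact strictMono_id
    | succ m ih => exact ih.comp (hτ m (F m))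
  have hF_sub : ∀ m l, m ≤ l → ∃ ρ : ℕ → ℕ, StrictMono ρ ∧ F l = F m ∘ ρ := by
    intro m l hml
    induction l, hml using Nat.le_induction with
    | base => exact ⟨id, strictMono_id, rfl⟩
    | succ l _ ih =>
      obtain ⟨ρ, hρ, hFρ⟩ := ih
      exact ⟨ρ ∘ τ l (F l), hρ.comp (hτ l (F l)), by rw [hF_succ, hFρ]; rfl⟩
  refine ⟨fun k => F (k + 1) k, strictMono_nat_of_lt_succ fun k => ?_,
    fun m => hQ_anti m (fun S hS => ?_) (hQτ m (F m))⟩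
  · show F (k + 1) k < F (k + 1) (τ (k + 1) (F (k + 1)) (k + 1))
    exact hF_mono (k + 1) ((lt_add_one k).trans_le (hτ _ _).le_apply)
  · obtain ⟨N, hN⟩ := mem_atTop_sets.1 (mem_map.1 hS)
    refine mem_map.2 (mem_atTop_sets.2 ⟨max m N, fun k hk => ?_⟩)
    obtain ⟨ρ, hρ, hFρ⟩ := hF_sub (m + 1) (k + 1) (by omega)
    show F (k + 1) k ∈ S
    rw [hFρ]
    exact hN _ ((le_of_max_le_right hk).trans hρ.le_apply)

section WeightedMean

variable {ν : ℝ → ℝ}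

theorem weightedMean_mono (hloc : LocallyIntegrable ν volume) (hν : ∀ s, 0 ≤ ν s)
    {f g : ℝ → ℝ} (hf : Continuous f) (hg : Continuous g) (hfg : ∀ s, f s ≤ g s)
    {r : ℝ} (hr : 0 ≤ r) : weightedMean ν f r ≤ weightedMean ν g r :=
  div_le_div_of_nonneg_right
    (integral_mono_on (by linarith) ((hloc.continuous_mul hf).intervalIntegrable _ _)
      ((hloc.continuous_mul hg).intervalIntegrable _ _)
      fun s _ => mul_le_mul_of_nonneg_right (hfg s) (hν s))
    (integral_nonneg (by linarith) fun s _ => hν s)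

theorem weightedMean_add (hloc : LocallyIntegrable ν volume) {f g : ℝ → ℝ}
    (hf : Continuous f) (hg : Continuous g) (r : ℝ) :
    weightedMean ν (fun s => f s + g s) r = weightedMean ν f r + weightedMean ν g r := by
  simp only [weightedMean, add_mul]
  rw [integral_add ((hloc.continuous_mul hf).intervalIntegrable _ _)
    ((hloc.continuous_mul hg).intervalIntegrable _ _), add_div]

theorem weightedMean_const_le {c : ℝ} (hc : 0 ≤ c) (r : ℝ) :
    weightedMean ν (fun _ => c) r ≤ c := by
  rw [weightedMean, intervalIntegral.integral_const_mul, mul_div_assoc]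
  exact mul_le_of_le_one_right hc (div_self_le_one _)

theorem weightedMean_nonneg (hν : ∀ s, 0 ≤ ν s) {f : ℝ → ℝ} (hf : ∀ s, 0 ≤ f s) {r : ℝ}
    (hr : 0 ≤ r) : 0 ≤ weightedMean ν f r :=
  div_nonneg (integral_nonneg (by linarith) fun s _ => mul_nonneg (hf s) (hν s))
    (integral_nonneg (by linarith) fun s _ => hν s)

theorem mul_integral_le_mul_weightedMean (hloc : LocallyIntegrable ν volume)
    {a b : ℝ} (ha : 0 < a) (hνa : ∀ s, a ≤ ν s) (hνb : ∀ s, ν s ≤ b) {ψ : ℝ → ℝ}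
    (hψ : Continuous ψ) (hψ0 : ∀ x, 0 ≤ ψ x) {R : ℝ} (hR : 0 < R) :
    a * ∫ x in (-R)..R, ψ x ≤ 2 * R * b * weightedMean ν ψ R := by
  have hnum : a * ∫ x in (-R)..R, ψ x ≤ ∫ x in (-R)..R, ψ x * ν x := by
    rw [← intervalIntegral.integral_const_mul]
    exact integral_mono_on (by linarith) ((hψ.intervalIntegrable _ _).const_mul a)
      ((hloc.continuous_mul hψ).intervalIntegrable _ _)
      fun x _ => by rw [mul_comm a]; exact mul_le_mul_of_nonneg_left (hνa x) (hψ0 x)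
  have hden_pos : 0 < ∫ x in (-R)..R, ν x :=
    intervalIntegral_pos_of_pos_on (hloc.intervalIntegrable _ _)
      (fun x _ => ha.trans_le (hνa x)) (by linarith)
  have hden : ∫ x in (-R)..R, ν x ≤ 2 * R * b := by
    calc ∫ x in (-R)..R, ν x ≤ ∫ _ in (-R)..R, b :=
          integral_mono_on (by linarith) (hloc.intervalIntegrable _ _) intervalIntegrable_const
            fun x _ => hνb x
      _ = 2 * R * b := by rw [intervalIntegral.integral_const, smul_eq_mul]; ring
  have hmean_nonneg : 0 ≤ weightedMean ν ψ R :=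
    weightedMean_nonneg (fun s => ha.le.trans (hνa s)) hψ0 hR.le
  calc a * ∫ x in (-R)..R, ψ x ≤ ∫ x in (-R)..R, ψ x * ν x := hnum
    _ = (∫ x in (-R)..R, ν x) * weightedMean ν ψ R := by
        rw [weightedMean, mul_div_cancel₀ _ hden_pos.ne']
    _ ≤ 2 * R * b * weightedMean ν ψ R := mul_le_mul_of_nonneg_right hden hmean_nonneg

end WeightedMean

section Ergodic

variable {n : ℕ} {ν : ℝ → ℝ}

theorem WPAA0.tendsto_weightedMean {φ : ℝ → Fin n → ℝ} (hφ : WPAA0 ν φ) :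
    Tendsto (weightedMean ν fun s => ‖φ s‖) atTop (𝓝 0) :=
  hφ.2.2

theorem WPAA0.sub (hloc : LocallyIntegrable ν volume) (hν : ∀ s, 0 ≤ ν s)
    {φ ψ : ℝ → Fin n → ℝ} (hφ : WPAA0 ν φ) (hψ : WPAA0 ν ψ) : WPAA0 ν (φ - ψ) := by
  obtain ⟨C, hC⟩ := hφ.2.1
  obtain ⟨D, hD⟩ := hψ.2.1
  refine ⟨hφ.1.sub hψ.1, ⟨C + D, fun t => (norm_sub_le _ _).trans (add_le_add (hC t) (hD t))⟩, ?_⟩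
  show Tendsto (weightedMean ν fun s => ‖(φ - ψ) s‖) atTop (𝓝 0)
  refine squeeze_zero'
    ((eventually_ge_atTop 0).mono fun r hr => weightedMean_nonneg hν (fun _ => norm_nonneg _) hr)
    ((eventually_ge_atTop 0).mono fun r hr => ?_)
    (by simpa using hφ.tendsto_weightedMean.add hψ.tendsto_weightedMean)
  calc weightedMean ν (fun s => ‖(φ - ψ) s‖) r
      ≤ weightedMean ν (fun s => ‖φ s‖ + ‖ψ s‖) r :=
        weightedMean_mono hloc hν (hφ.1.sub hψ.1).norm (hφ.1.norm.add hψ.1.norm)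
          (fun s => norm_sub_le _ _) hr
    _ = _ := weightedMean_add hloc hφ.1.norm hψ.1.norm r

theorem WPAA0.of_tendstoUniformly (hloc : LocallyIntegrable ν volume) (hν : ∀ s, 0 ≤ ν s)
    {Φ : ℕ → ℝ → Fin n → ℝ} {φ : ℝ → Fin n → ℝ} (hΦ : ∀ k, WPAA0 ν (Φ k))
    (hlim : TendstoUniformly Φ φ atTop) : WPAA0 ν φ := by
  have hclose : ∀ ε > 0, ∃ k, ∀ t, ‖φ t‖ ≤ ‖Φ k t‖ + ε := fun ε hε =>
    (Metric.tendstoUniformly_iff.1 hlim ε hε).exists.imp fun k hk t =>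
      (norm_le_norm_add_norm_sub' (φ t) (Φ k t)).trans (by rw [← dist_eq_norm]; linarith [hk t])
  have hφc : Continuous φ := hlim.continuous (Frequently.of_forall fun k => (hΦ k).1)
  refine ⟨hφc, ?_, ?_⟩
  · obtain ⟨k, hk⟩ := hclose 1 one_pos
    obtain ⟨C, hC⟩ := (hΦ k).2.1
    exact ⟨C + 1, fun t => (hk t).trans (by linarith [hC t])⟩
  · show Tendsto (weightedMean ν fun s => ‖φ s‖) atTop (𝓝 0)
    refine Metric.tendsto_nhds.2 fun ε hε => ?_
    obtain ⟨k, hk⟩ := hclose (ε / 2) (half_pos hε)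
    have hΦk := (hΦ k).1.norm
    filter_upwards [eventually_ge_atTop 0,
      Metric.tendsto_nhds.1 (hΦ k).tendsto_weightedMean (ε / 2) (half_pos hε)] with r hr hkr
    rw [Real.dist_0_eq_abs] at hkr ⊢
    have hle : weightedMean ν (fun s => ‖φ s‖) r ≤
        weightedMean ν (fun s => ‖Φ k s‖) r + ε / 2 :=
      calc weightedMean ν (fun s => ‖φ s‖) r
          ≤ weightedMean ν (fun s => ‖Φ k s‖ + ε / 2) r :=
            weightedMean_mono hloc hν hφc.norm (hΦk.add continuous_const) hk hr
        _ = weightedMean ν (fun s => ‖Φ k s‖) r + weightedMean ν (fun _ => ε / 2) r :=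
            weightedMean_add hloc hΦk continuous_const r
        _ ≤ _ := add_le_add_right (weightedMean_const_le (half_pos hε).le r) _
    rw [abs_of_nonneg (weightedMean_nonneg hν (fun _ => norm_nonneg _) hr)]
    linarith [(abs_lt.1 hkr).2]

end Ergodic

theorem mul_le_card_mul_integral_of_forall_exists_le {ψ : ℝ → ℝ} (hψ : Continuous ψ)
    (hψ0 : ∀ x, 0 ≤ ψ x) {L : Finset ℝ} {K R δ : ℝ} (hK : ∀ c ∈ L, |c| ≤ K) (hKR : K ≤ R)
    (hcover : ∀ x, ∃ c ∈ L, δ ≤ ψ (x + c)) :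
    2 * (R - K) * δ ≤ #L * ∫ x in (-R)..R, ψ x := by
  have hshift : ∀ c, Continuous fun x => ψ (x + c) := fun c => hψ.comp (continuous_add_const c)
  calc 2 * (R - K) * δ = ∫ _ in (-(R - K))..(R - K), δ := by
        rw [intervalIntegral.integral_const, smul_eq_mul]; ring
    _ ≤ ∫ x in (-(R - K))..(R - K), ∑ c ∈ L, ψ (x + c) := by
        refine integral_mono_on (by linarith) intervalIntegrable_const
          ((continuous_finsetSum _ fun c _ => hshift c).intervalIntegrable _ _) fun x _ => ?_
        obtain ⟨c, hc, hδc⟩ := hcover x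
        exact hδc.trans (single_le_sum (fun c _ => hψ0 (x + c)) hc)
    _ = ∑ c ∈ L, ∫ x in (-(R - K) + c)..(R - K + c), ψ x := by
        rw [integral_finsetSum fun c _ => (hshift c).intervalIntegrable _ _]
        exact sum_congr rfl fun c _ => integral_comp_add_right _ c
    _ ≤ ∑ c ∈ L, ∫ x in (-R)..R, ψ x := by
        refine sum_le_sum fun c hc => ?_
        obtain ⟨hc₁, hc₂⟩ := abs_le.1 (hK c hc)
        exact integral_mono_interval (by linarith) (by linarith) (by linarith)
          (ae_of_all _ hψ0) (hψ.intervalIntegrable _ _)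
    _ = #L * ∫ x in (-R)..R, ψ x := by rw [sum_const, nsmul_eq_mul]

theorem exists_forall_lt_of_tendsto_weightedMean {ν : ℝ → ℝ} (hloc : LocallyIntegrable ν volume)
    {a b : ℝ} (ha : 0 < a) (hνa : ∀ s, a ≤ ν s) (hνb : ∀ s, ν s ≤ b) {ψ : ℝ → ℝ}
    (hψ : Continuous ψ) (hψ0 : ∀ x, 0 ≤ ψ x) (hmean : Tendsto (weightedMean ν ψ) atTop (𝓝 0))
    (L : Finset ℝ) {δ : ℝ} (hδ : 0 < δ) : ∃ u, ∀ c ∈ L, ψ (u + c) < δ := by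
  by_contra! hcover
  obtain ⟨c₀, hc₀, -⟩ := hcover 0
  have hL : (0 : ℝ) < #L := by exact_mod_cast L.card_pos.2 ⟨c₀, hc₀⟩
  have hb : 0 < b := ha.trans_le ((hνa 0).trans (hνb 0))
  set K := ∑ c ∈ L, |c|
  have hK : ∀ c ∈ L, |c| ≤ K := fun c hc => single_le_sum (fun c _ => abs_nonneg c) hc
  have hK0 : 0 ≤ K := sum_nonneg fun c _ => abs_nonneg c
  -- for `R ≥ 2 K`, the covering bound forces `weightedMean ν ψ R ≥ ε`
  set ε := a * δ / (2 * b * #L)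
  obtain ⟨R, hKR, hR, hsmall⟩ := ((eventually_ge_atTop (2 * K)).and ((eventually_gt_atTop 0).and
    (hmean.eventually (gt_mem_nhds (by positivity : 0 < ε))))).exists
  have hcount :=
    mul_le_card_mul_integral_of_forall_exists_le (R := R) hψ hψ0 hK (by linarith) hcover
  refine lt_irrefl (a * R * δ) ?_
  calc a * R * δ ≤ a * (2 * (R - K) * δ) := by nlinarith [mul_pos ha hδ]
    _ ≤ a * (#L * ∫ x in (-R)..R, ψ x) := mul_le_mul_of_nonneg_left hcount ha.le
    _ = #L * (a * ∫ x in (-R)..R, ψ x) := by ring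
    _ ≤ #L * (2 * R * b * weightedMean ν ψ R) :=
        mul_le_mul_of_nonneg_left (mul_integral_le_mul_weightedMean hloc ha hνa hνb hψ hψ0 hR)
          hL.le
    _ < #L * (2 * R * b * ε) := by gcongr
    _ = a * R * δ := by simp only [ε]; field_simp

section AlmostAutomorphic

variable {n : ℕ}

theorem AlmostAutomorphic.sub {g₁ g₂ : ℝ → Fin n → ℝ} (h₁ : AlmostAutomorphic g₁)
    (h₂ : AlmostAutomorphic g₂) : AlmostAutomorphic (g₁ - g₂) := by
  intro s
  obtain ⟨σ₁, hσ₁, h₁, hgh₁, hhg₁⟩ := h₁ s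
  obtain ⟨σ₂, hσ₂, h₂, hgh₂, hhg₂⟩ := h₂ (s ∘ σ₁)
  exact ⟨σ₁ ∘ σ₂, hσ₁.comp hσ₂, h₁ - h₂,
    fun t => ((hgh₁ t).comp hσ₂.tendsto_atTop).sub (hgh₂ t),
    fun t => ((hhg₁ t).comp hσ₂.tendsto_atTop).sub (hhg₂ t)⟩

theorem AlmostAutomorphic.of_tendstoUniformly {G : ℕ → ℝ → Fin n → ℝ}
    {g : ℝ → Fin n → ℝ} (hG : ∀ m, AlmostAutomorphic (G m)) (hlim : TendstoUniformly G g atTop) :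
    AlmostAutomorphic g := by
  intro s
  obtain ⟨d, hd, hdQ⟩ := exists_strictMono_forall_of_antitone (Q := fun m l =>
      ∃ H : ℝ → Fin n → ℝ, (∀ t, Tendsto (fun i => G m (t + s i)) l (𝓝 (H t))) ∧
        ∀ t, Tendsto (fun i => H (t - s i)) l (𝓝 (G m t)))
    (fun m σ => by
      obtain ⟨τ, hτ, H, hGH, hHG⟩ := hG m (s ∘ σ)
      exact ⟨τ, hτ, H, fun t => tendsto_map'_iff.2 (hGH t), fun t => tendsto_map'_iff.2 (hHG t)⟩)
    fun m l l' hle ⟨H, hGH, hHG⟩ =>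
      ⟨H, fun t => (hGH t).mono_left hle, fun t => (hHG t).mono_left hle⟩
  choose H hGH hHG using hdQ
  have hGcauchy :=
    Metric.uniformCauchySeqOn_iff.1 (tendstoUniformlyOn_univ.2 hlim).uniformCauchySeqOn
  have hHcauchy : UniformCauchySeqOn H atTop Set.univ := by
    refine Metric.uniformCauchySeqOn_iff.2 fun ε hε => ?_
    obtain ⟨N, hN⟩ := hGcauchy (ε / 2) (half_pos hε)
    refine ⟨N, fun m hm l hl t _ => (le_of_tendsto ((hGH m t).dist (hGH l t))
      (Eventually.of_forall fun i => (hN m hm l hl _ trivial).le)).trans_lt (half_lt_self hε)⟩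
  obtain ⟨h, hHh⟩ := hHcauchy.exists_tendstoUniformly
  refine ⟨d, hd, h, fun t => ?_, fun t => ?_⟩
  · exact tendsto_map'_iff.1 ((hlim.comp fun i => t + s i).tendsto_of_eventually_tendsto
      (Eventually.of_forall fun m => hGH m t) (hHh.tendsto_at t))
  · exact tendsto_map'_iff.1 ((hHh.comp fun i => t - s i).tendsto_of_eventually_tendsto
      (Eventually.of_forall fun m => hHG m t) (hlim.tendsto_at t))

theorem norm_le_of_forall_norm_add_le {ν : ℝ → ℝ} (hloc : LocallyIntegrable ν volume)
    {a b : ℝ} (ha : 0 < a) (hνa : ∀ s, a ≤ ν s) (hνb : ∀ s, ν s ≤ b)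
    {g φ : ℝ → Fin n → ℝ} (hg : AlmostAutomorphic g) (hφ : WPAA0 ν φ) {C : ℝ}
    (hC : ∀ t, ‖g t + φ t‖ ≤ C) (t₀ : ℝ) : ‖g t₀‖ ≤ C := by
  refine le_of_forall_pos_le_add fun ε hε => ?_
  obtain ⟨s, -, hs⟩ := exists_seq_of_forall_finset_exists (fun _ => True)
    (fun x y => ‖φ (t₀ - x + y)‖ < ε) fun S _ => by
      obtain ⟨u, hu⟩ := exists_forall_lt_of_tendsto_weightedMean hloc ha hνa hνb hφ.1.norm
        (fun _ => norm_nonneg _) hφ.tendsto_weightedMean (S.image (t₀ - ·)) hε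
      refine ⟨u, trivial, fun x hx => ?_⟩
      rw [add_comm]
      exact hu _ (mem_image_of_mem _ hx)
  obtain ⟨σ, hσ, h, hgh, hhg⟩ := hg s
  have hbound : ∀ k, ‖h (t₀ - s (σ k))‖ ≤ C + ε := fun k => by
    refine le_of_tendsto (hgh _).norm ((eventually_gt_atTop k).mono fun j hj => ?_)
    exact (norm_le_add_norm_add _ _).trans (add_le_add (hC _) (hs _ _ (hσ hj)).le)
  exact le_of_tendsto (hhg t₀).norm (Eventually.of_forall hbound)

end AlmostAutomorphic

/-- `WPAA(ℝ,ν)` is closed in the Banach space of bounded continuous functions,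
hence is itself a Banach space with the sup norm. -/
theorem stmt_13 {n : ℕ} (ν : ℝ → ℝ) (hν : WeightUB ν) :
    IsClosed {F : ℝ →ᵇ (Fin n → ℝ) |
      ∃ g φ : ℝ → (Fin n → ℝ), AlmostAutomorphic g ∧ WPAA0 ν φ ∧
        ∀ t, F t = g t + φ t} := by
  obtain ⟨hpos, hloc, ⟨b, hνb⟩, ⟨a, ha, hνa⟩, -⟩ := hν
  have hν0 : ∀ s, 0 ≤ ν s := fun s => (hpos s).le
  refine IsSeqClosed.isClosed fun F F₀ hF hlim => ?_
  choose g φ hg hφ hFgφ using hF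
  have hφ_eq : φ = fun k => ⇑(F k) - g k := funext fun k => funext fun t => by simp [hFgφ k t]
  have hg_dist : ∀ k l t, dist (g k t) (g l t) ≤ dist (F k) (F l) := fun k l t => by
    rw [dist_eq_norm]
    refine norm_le_of_forall_norm_add_le hloc ha hνa hνb ((hg k).sub (hg l))
      ((hφ k).sub hloc hν0 (hφ l)) (fun u => ?_) t
    calc ‖(g k - g l) u + (φ k - φ l) u‖ = dist (F k u) (F l u) := by
          rw [dist_eq_norm, hFgφ, hFgφ]; congr 1; simp only [Pi.sub_apply]; abel
      _ ≤ dist (F k) (F l) := dist_coe_le_dist u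
  have hg_cauchy : UniformCauchySeqOn g atTop Set.univ :=
    Metric.uniformCauchySeqOn_iff.2 fun ε hε =>
      (Metric.cauchySeq_iff.1 hlim.cauchySeq ε hε).imp fun _ hN m hm l hl t _ =>
        (hg_dist m l t).trans_lt (hN m hm l hl)
  obtain ⟨g₀, hg₀⟩ := hg_cauchy.exists_tendstoUniformly
  refine ⟨g₀, F₀ - g₀, AlmostAutomorphic.of_tendstoUniformly hg hg₀,
    WPAA0.of_tendstoUniformly hloc hν0 hφ ?_, fun t => by simp⟩
  rw [hφ_eq]
  exact (tendsto_iff_tendstoUniformly.1 hlim).sub hg₀
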